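/- Let V be a 2-dimensional complex symplectic vector space with form ε and dyad o, ι with ε(o,ι)=1. For any Ψ ∈ Sym⁴(V), the Ψ₂-component (i.e. the full contraction with o,o,ι,ι) of the symmetric tensor Sym[Ψ_{ABC}{}^{E}(o_D ι_E + ι_D o_E)] vanishes. Consequently, if Ψ has Ψ₂ ≠ 0 then no scalar multiple g·Sym[Ψ_{ABC}{}^{E}(o_D ι_E + ι_D o_E)] can equal Ψ. -/
import Mathlib


noncomputable section

/-- The tensor product of four "lowered" vectors, as a quadrilinear form:
`(v₁ ⊗ v₂ ⊗ v₃ ⊗ v₄)(x) = ∏ ε(vᵢ, xᵢ)` (indices lowered with `ε`). -/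
def tp4 {V : Type*} [AddCommGroup V] [Module ℂ V]
    (ε : V →ₗ[ℂ] V →ₗ[ℂ] ℂ) (v : Fin 4 → V) : (Fin 4 → V) → ℂ :=
  fun x => ∏ i, ε (v i) (x i)

/-- Total symmetrization of a 4-slot form (average over all 24 permutations). -/
def sym4 {V : Type*} [AddCommGroup V] [Module ℂ V]
    (T : (Fin 4 → V) → ℂ) : (Fin 4 → V) → ℂ :=
  fun x => (24 : ℂ)⁻¹ * ∑ σ : Equiv.Perm (Fin 4), T (fun i => x (σ i))

/-- The contraction `Ψ_{ABC}{}^{E}(o_D ι_E + ι_D o_E)` of a (lowered) 4-tensor `Ψ`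
against `o_D ι_E + ι_D o_E`, with indices raised/lowered by `ε` (convention
`ξ^A = ε^{AB} ξ_B`, tensors evaluated via `v_A x^A = ε(v,x)`). -/
def contr4 {V : Type*} [AddCommGroup V] [Module ℂ V]
    (ε : V →ₗ[ℂ] V →ₗ[ℂ] ℂ) (o ι : V) (Ψ : (Fin 4 → V) → ℂ) : (Fin 4 → V) → ℂ :=
  fun x => -(ε o (x 3) * Ψ (Function.update x 3 ι) + ε ι (x 3) * Ψ (Function.update x 3 o))

lemma update_comp_perm {V : Type*} (x : Fin 4 → V) (σ : Equiv.Perm (Fin 4)) (v : V) :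
    Function.update (fun i => x (σ i)) 3 v = fun i => Function.update x (σ 3) v (σ i) := by
  funext i
  by_cases h : i = 3
  · subst h; simp [Function.update]
  · have h2 : σ i ≠ σ 3 := fun hc => h (σ.injective hc)
    simp [Function.update, h, h2]

/-- For any totally symmetric 4-tensor `Ψ`, the `Ψ₂`-component
(full contraction with `o,o,ι,ι`) of `Sym[Ψ_{ABC}{}^{E}(o_D ι_E + ι_D o_E)]`
vanishes; hence if `Ψ(o,o,ι,ι) ≠ 0`, no scalar multiple
`g·Sym[Ψ_{ABC}{}^{E}(o_D ι_E + ι_D o_E)]` can equal `Ψ`. -/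
theorem stmt5 {V : Type*} [AddCommGroup V] [Module ℂ V]
    (hdim : Module.finrank ℂ V = 2)
    (ε : V →ₗ[ℂ] V →ₗ[ℂ] ℂ) (halt : ∀ v : V, ε v v = 0)
    (o ι : V) (hn : ε o ι = 1)
    (Ψ : MultilinearMap ℂ (fun _ : Fin 4 => V) ℂ)
    (hsym : ∀ (σ : Equiv.Perm (Fin 4)) (x : Fin 4 → V), Ψ (fun i => x (σ i)) = Ψ x) :
    sym4 (contr4 ε o ι (fun y => Ψ y)) ![o, o, ι, ι] = 0 ∧
    (Ψ ![o, o, ι, ι] ≠ 0 →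
      ¬ ∃ g : ℂ, ∀ x : Fin 4 → V,
          g * sym4 (contr4 ε o ι (fun y => Ψ y)) x = Ψ x) := by
  have hio : ε ι o = -1 := by
    have h := halt (o + ι)
    simp only [map_add, LinearMap.add_apply, halt, hn] at h
    linear_combination h
  set x : Fin 4 → V := ![o, o, ι, ι] with hx
  -- the value of each summand depends only on σ 3
  set f : Fin 4 → ℂ := fun j =>
    -(ε o (x j) * Ψ (Function.update x j ι) + ε ι (x j) * Ψ (Function.update x j o)) with hf
  have key : ∀ σ : Equiv.Perm (Fin 4),
      contr4 ε o ι (fun y => Ψ y) (fun i => x (σ i)) = f (σ 3) := by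
    intro σ
    simp only [contr4, hf, update_comp_perm x σ, hsym σ]
  have hzero : sym4 (contr4 ε o ι (fun y => Ψ y)) x = 0 := by
    have hsum : ∑ σ : Equiv.Perm (Fin 4),
        contr4 ε o ι (fun y => Ψ y) (fun i => x (σ i)) = ∑ σ : Equiv.Perm (Fin 4), f (σ 3) :=
      Finset.sum_congr rfl fun σ _ => key σ
    have hfib : ∑ σ : Equiv.Perm (Fin 4), f (σ 3) = ∑ j : Fin 4, (6 : ℂ) * f j := by
      rw [Finset.sum_comp f (fun σ : Equiv.Perm (Fin 4) => σ 3)]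
      have himg : (Finset.univ.image fun σ : Equiv.Perm (Fin 4) => σ 3) = Finset.univ := by
        decide
      rw [himg]
      refine Finset.sum_congr rfl fun j _ => ?_
      have hcard : (Finset.univ.filter fun σ : Equiv.Perm (Fin 4) => σ 3 = j).card = 6 := by
        revert j; decide
      rw [hcard, nsmul_eq_mul]
      norm_num
    have h0 : x 0 = o := rfl
    have h1 : x 1 = o := rfl
    have h2 : x 2 = ι := rfl
    have h3 : x 3 = ι := rfl
    have hu0 : Function.update x 0 o = x := by rw [← h0]; exact Function.update_eq_self _ _
    have hu1 : Function.update x 1 o = x := by rw [← h1]; exact Function.update_eq_self _ _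
    have hu2 : Function.update x 2 ι = x := by rw [← h2]; exact Function.update_eq_self _ _
    have hu3 : Function.update x 3 ι = x := by rw [← h3]; exact Function.update_eq_self _ _
    have hfin : ∑ j : Fin 4, (6 : ℂ) * f j = 0 := by
      rw [Fin.sum_univ_four]
      simp only [hf, h0, h1, h2, h3, hu0, hu1, hu2, hu3, halt, hn, hio]
      ring
    simp only [sym4, hsum, hfib, hfin, mul_zero]
  refine ⟨hzero, fun hne ⟨g, hg⟩ => ?_⟩
  have := hg x
  rw [hzero, mul_zero] at this
  exact hne this.symm
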